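/- Let A and P be the sets of term and formula variables, let P' and A' be disjoint copies of A with bijections π₁ : P' → A and π₂ : A' → A, and let σ₀ be the substitution fixing each p ∈ P, mapping each p' ∈ P' to the PDL_REwLA+ formula ⟨π₁(p')^{∩id}⟩T, and mapping each a' ∈ A' to the PDL_REwLA+ term π₂(a')^{∩i̅d}. For every PDL⁻ formula φ over term variables A' and formula variables P ⊔ P': if the PDL_REwLA+ formula σ₀(φ) (over A, P) is valid on GRELfinlin, then φ is valid on GRELsfinlin. -/

import Mathlib

/-! Statement 7: if `σ₀(φ)` is valid on GRELfinlin then the PDL⁻ formula `φ` is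
valid on GRELsfinlin. -/

/-- A generalized structure over term variables `A` and formula variables `P`,
with universe `W`. -/
structure GStruct (A P W : Type) where
  U : W → W → Prop
  rel : A → W → W → Prop
  rel_sub : ∀ a x y, rel a x y → U x y
  val : P → W → Prop

/-- The universal relation is a finite linear order (on a nonempty finite universe). -/
def FinLin {A P W : Type} (S : GStruct A P W) : Prop :=
  Nonempty W ∧ Finite W ∧ (∀ x, S.U x x) ∧
    (∀ x y z, S.U x y → S.U y z → S.U x z) ∧
    (∀ x y, S.U x y → S.U y x → x = y) ∧ (∀ x y, S.U x y ∨ S.U y x)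

/-- The universal relation is a finite strict linear order
(on a nonempty finite universe). -/
def SFinLin {A P W : Type} (S : GStruct A P W) : Prop :=
  Nonempty W ∧ Finite W ∧ (∀ x, ¬ S.U x x) ∧
    (∀ x y z, S.U x y → S.U y z → S.U x z) ∧
    (∀ x y, x ≠ y → S.U x y ∨ S.U y x)
mutual
  /-- Formulas of PDL for REwLA+. -/
  inductive Fml (A P : Type) : Type where
    | pv : P → Fml A P
    | imp : Fml A P → Fml A P → Fml A P
    | fls : Fml A P
    | box : Trm A P → Fml A P → Fml A P
  /-- Terms of PDL for REwLA+. -/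
  inductive Trm (A P : Type) : Type where
    | tv : A → Trm A P
    | comp : Trm A P → Trm A P → Trm A P
    | union : Trm A P → Trm A P → Trm A P
    | plus : Trm A P → Trm A P
    | adom : Trm A P → Trm A P
    | capId : Trm A P → Trm A P
    | capNid : Trm A P → Trm A P
    | test : Fml A P → Trm A P
end

namespace Fml
/-- ¬φ := φ → F -/
def neg {A P : Type} (φ : Fml A P) : Fml A P := .imp φ .fls
/-- T := ¬F -/
def tru {A P : Type} : Fml A P := neg .fls
/-- φ ∨ ψ := ¬φ → ψ -/
def or {A P : Type} (φ ψ : Fml A P) : Fml A P := .imp (neg φ) ψ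
/-- φ ∧ ψ := ¬(¬φ ∨ ¬ψ) -/
def and {A P : Type} (φ ψ : Fml A P) : Fml A P := neg (or (neg φ) (neg ψ))
/-- φ ↔ ψ := (φ → ψ) ∧ (ψ → φ) -/
def iff {A P : Type} (φ ψ : Fml A P) : Fml A P := and (.imp φ ψ) (.imp ψ φ)
/-- ⟨e⟩φ := ¬[e]¬φ -/
def dia {A P : Type} (e : Trm A P) (φ : Fml A P) : Fml A P := neg (.box e (neg φ))
end Fml

mutual
  /-- Semantics of PDL_REwLA+ formulas on a generalized structure. -/
  def semF {A P W : Type} (S : GStruct A P W) : Fml A P → W → Prop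
    | .pv p, x => S.val p x
    | .imp φ ψ, x => semF S φ x → semF S ψ x
    | .fls, _ => False
    | .box e φ, x => ∀ y, semT S e x y → semF S φ y
  /-- Semantics of PDL_REwLA+ terms on a generalized structure. -/
  def semT {A P W : Type} (S : GStruct A P W) : Trm A P → W → W → Prop
    | .tv a, x, y => S.rel a x y
    | .comp e f, x, z => ∃ y, semT S e x y ∧ semT S f y z
    | .union e f, x, y => semT S e x y ∨ semT S f x y
    | .plus e, x, y => Relation.TransGen (fun u v => semT S e u v) x y
    | .adom e, x, y => x = y ∧ ∀ z, ¬ semT S e x z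
    | .capId e, x, y => semT S e x y ∧ x = y
    | .capNid e, x, y => semT S e x y ∧ x ≠ y
    | .test φ, x, y => x = y ∧ semF S φ x
end
mutual
  /-- Formulas of identity-free PDL (PDL⁻). -/
  inductive MFml (A P : Type) : Type where
    | pv : P → MFml A P
    | imp : MFml A P → MFml A P → MFml A P
    | fls : MFml A P
    | box : MTrm A P → MFml A P → MFml A P
  /-- Terms of identity-free PDL (PDL⁻). -/
  inductive MTrm (A P : Type) : Type where
    | tv : A → MTrm A P
    | comp : MTrm A P → MTrm A P → MTrm A P
    | union : MTrm A P → MTrm A P → MTrm A P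
    | plus : MTrm A P → MTrm A P
    | testL : MFml A P → MTrm A P → MTrm A P
    | testR : MTrm A P → MFml A P → MTrm A P
end

namespace MFml
/-- ¬φ := φ → F -/
def neg {A P : Type} (φ : MFml A P) : MFml A P := .imp φ .fls
/-- T := ¬F -/
def tru {A P : Type} : MFml A P := neg .fls
/-- φ ∨ ψ := ¬φ → ψ -/
def or {A P : Type} (φ ψ : MFml A P) : MFml A P := .imp (neg φ) ψ
/-- φ ∧ ψ := ¬(¬φ ∨ ¬ψ) -/
def and {A P : Type} (φ ψ : MFml A P) : MFml A P := neg (or (neg φ) (neg ψ))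
/-- φ ↔ ψ := (φ → ψ) ∧ (ψ → φ) -/
def iff {A P : Type} (φ ψ : MFml A P) : MFml A P := and (.imp φ ψ) (.imp ψ φ)
/-- ⟨e⟩φ := ¬[e]¬φ -/
def dia {A P : Type} (e : MTrm A P) (φ : MFml A P) : MFml A P := neg (.box e (neg φ))
end MFml

mutual
  /-- Semantics of PDL⁻ formulas on a generalized structure. -/
  def msemF {A P W : Type} (S : GStruct A P W) : MFml A P → W → Prop
    | .pv p, x => S.val p x
    | .imp φ ψ, x => msemF S φ x → msemF S ψ x
    | .fls, _ => False
    | .box e φ, x => ∀ y, msemT S e x y → msemF S φ y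
  /-- Semantics of PDL⁻ terms on a generalized structure. -/
  def msemT {A P W : Type} (S : GStruct A P W) : MTrm A P → W → W → Prop
    | .tv a, x, y => S.rel a x y
    | .comp e f, x, z => ∃ y, msemT S e x y ∧ msemT S f y z
    | .union e f, x, y => msemT S e x y ∨ msemT S f x y
    | .plus e, x, y => Relation.TransGen (fun u v => msemT S e u v) x y
    | .testL ψ e, x, y => msemF S ψ x ∧ msemT S e x y
    | .testR e ψ, x, y => msemT S e x y ∧ msemF S ψ y
end
mutual
  /-- The substitution `σ₀` applied to a PDL⁻ formula over term variables `A'` and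
  formula variables `P ⊕ P'`: each `p ∈ P` is fixed, each `p' ∈ P'` becomes
  `⟨π₁(p')^{∩id}⟩T`, and each `a' ∈ A'` becomes `π₂(a')^{∩i̅d}`. -/
  def sigF {A P A' P' : Type} (π₁ : P' ≃ A) (π₂ : A' ≃ A) :
      MFml A' (P ⊕ P') → Fml A P
    | .pv (Sum.inl p) => .pv p
    | .pv (Sum.inr p') => Fml.dia (.capId (.tv (π₁ p'))) Fml.tru
    | .imp φ ψ => .imp (sigF π₁ π₂ φ) (sigF π₁ π₂ ψ)
    | .fls => .fls
    | .box e φ => .box (sigT π₁ π₂ e) (sigF π₁ π₂ φ)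
  /-- The substitution `σ₀` applied to a PDL⁻ term. -/
  def sigT {A P A' P' : Type} (π₁ : P' ≃ A) (π₂ : A' ≃ A) :
      MTrm A' (P ⊕ P') → Trm A P
    | .tv a' => .capNid (.tv (π₂ a'))
    | .comp e f => .comp (sigT π₁ π₂ e) (sigT π₁ π₂ f)
    | .union e f => .union (sigT π₁ π₂ e) (sigT π₁ π₂ f)
    | .plus e => .plus (sigT π₁ π₂ e)
    | .testL ψ e => .comp (.test (sigF π₁ π₂ ψ)) (sigT π₁ π₂ e)
    | .testR e ψ => .comp (sigT π₁ π₂ e) (.test (sigF π₁ π₂ ψ))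
end

/-!
Given a structure `S` on a finite strict linear order, add the diagonal to its universal
relation and let `π₁ p'`-loops mark the points satisfying `p'`, while the off-diagonal part of
`π₂ a'` is the relation of `a'`. In the resulting finite linear order `⟨(π₁ p')^{∩id}⟩T` holds
exactly where `p'` did, and `(π₂ a')^{∩i̅d}` is the relation of `a'` because atomic relations of
`S` are irreflexive; hence `σ₀(φ)` and `φ` agree pointwise.
-/

namespace GStruct

variable {A P A' P' W : Type} (π₁ : P' ≃ A) (π₂ : A' ≃ A)

def unsubst (S : GStruct A' (P ⊕ P') W) : GStruct A P W where
  U x y := x = y ∨ S.U x y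
  rel a x y := (x = y ∧ S.val (.inr (π₁.symm a)) x) ∨ (x ≠ y ∧ S.rel (π₂.symm a) x y)
  rel_sub _ _ _ h := h.imp And.left fun h => S.rel_sub _ _ _ h.2
  val p := S.val (.inl p)

theorem finLin_unsubst {S : GStruct A' (P ⊕ P') W} (hS : SFinLin S) :
    FinLin (S.unsubst π₁ π₂) := by
  obtain ⟨hne, hfin, hirr, htrans, htot⟩ := hS
  refine ⟨hne, hfin, fun _ => .inl rfl, ?_, ?_, fun x y => ?_⟩
  · rintro x y z (rfl | hxy) (rfl | hyz)
    exacts [.inl rfl, .inr hyz, .inr hxy, .inr (htrans _ _ _ hxy hyz)]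
  · rintro x y (rfl | hxy) (hyx | hyx)
    exacts [rfl, rfl, hyx.symm, (hirr x (htrans _ _ _ hxy hyx)).elim]
  · rcases eq_or_ne x y with rfl | hxy
    · exact .inl (.inl rfl)
    · exact (htot x y hxy).imp .inr .inr

variable {S : GStruct A' (P ⊕ P') W}

mutual

theorem semF_unsubst_sigF (hirr : ∀ a x, ¬ S.rel a x x) (φ : MFml A' (P ⊕ P')) (x : W) :
    semF (S.unsubst π₁ π₂) (sigF π₁ π₂ φ) x ↔ msemF S φ x :=
  match φ with
  | .pv (.inl _) => Iff.rfl
  | .pv (.inr p') => by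
    simp only [sigF, Fml.dia, Fml.neg, Fml.tru, semF, semT, msemF, unsubst,
      Equiv.symm_apply_apply]
    constructor
    · intro h
      by_contra hx
      refine h fun y ⟨hy, hxy⟩ _ => ?_
      rcases hy with ⟨-, hy⟩ | ⟨hne, -⟩
      exacts [hx (hxy ▸ hy), hne hxy]
    · exact fun hp' h => h x ⟨.inl ⟨rfl, hp'⟩, rfl⟩ id
  | .imp φ ψ =>
    imp_congr (semF_unsubst_sigF hirr φ x) (semF_unsubst_sigF hirr ψ x)
  | .fls => Iff.rfl
  | .box e ψ =>
    forall_congr' fun y => imp_congr (semT_unsubst_sigT hirr e x y) (semF_unsubst_sigF hirr ψ y)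

theorem semT_unsubst_sigT (hirr : ∀ a x, ¬ S.rel a x x) (e : MTrm A' (P ⊕ P')) (x y : W) :
    semT (S.unsubst π₁ π₂) (sigT π₁ π₂ e) x y ↔ msemT S e x y :=
  match e with
  | .tv a' => by
    simp only [sigT, semT, msemT, unsubst, Equiv.symm_apply_apply]
    constructor
    · rintro ⟨⟨hxy, -⟩ | ⟨-, h⟩, hne⟩
      exacts [(hne hxy).elim, h]
    · intro h
      have hne : x ≠ y := by rintro rfl; exact hirr _ _ h
      exact ⟨.inr ⟨hne, h⟩, hne⟩
  | .comp e f => exists_congr fun z =>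
    and_congr (semT_unsubst_sigT hirr e x z) (semT_unsubst_sigT hirr f z y)
  | .union e f => or_congr (semT_unsubst_sigT hirr e x y) (semT_unsubst_sigT hirr f x y)
  | .plus e => by
    have h : (fun u v => semT (S.unsubst π₁ π₂) (sigT π₁ π₂ e) u v) = msemT S e :=
      funext₂ fun u v => propext (semT_unsubst_sigT hirr e u v)
    simp only [sigT, semT, msemT, h]
  | .testL ψ e => by
    simp only [sigT, semT, msemT]
    constructor
    · rintro ⟨_, ⟨rfl, hψ⟩, he⟩
      exact ⟨(semF_unsubst_sigF hirr ψ x).1 hψ, (semT_unsubst_sigT hirr e x y).1 he⟩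
    · rintro ⟨hψ, he⟩
      exact ⟨x, ⟨rfl, (semF_unsubst_sigF hirr ψ x).2 hψ⟩,
        (semT_unsubst_sigT hirr e x y).2 he⟩
  | .testR e ψ => by
    simp only [sigT, semT, msemT]
    constructor
    · rintro ⟨z, he, ⟨rfl, hψ⟩⟩
      exact ⟨(semT_unsubst_sigT hirr e x z).1 he, (semF_unsubst_sigF hirr ψ z).1 hψ⟩
    · rintro ⟨he, hψ⟩
      exact ⟨y, (semT_unsubst_sigT hirr e x y).2 he,
        ⟨rfl, (semF_unsubst_sigF hirr ψ y).2 hψ⟩⟩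

end

end GStruct

theorem valid_finlin_of_sig_to_valid_sfinlin
    {A P A' P' : Type} (π₁ : P' ≃ A) (π₂ : A' ≃ A) (φ : MFml A' (P ⊕ P')) :
    (∀ (W : Type) (S : GStruct A P W), FinLin S → ∀ x : W, semF S (sigF π₁ π₂ φ) x) →
    (∀ (W : Type) (S : GStruct A' (P ⊕ P') W), SFinLin S → ∀ x : W, msemF S φ x) := by
  intro hvalid W S hS x
  have hirr : ∀ a x, ¬ S.rel a x x := fun a x h => hS.2.2.1 x (S.rel_sub a x x h)
  exact (GStruct.semF_unsubst_sigF π₁ π₂ hirr φ x).1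
    (hvalid W (S.unsubst π₁ π₂) (GStruct.finLin_unsubst π₁ π₂ hS) x)
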